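/- Every k_ω-space is normal. -/

import Mathlib

open Set Topology

def IsKOmegaStructure {X : Type*} [TopologicalSpace X] (K : ℕ → Set X) : Prop :=
  (∀ n, IsCompact (K n)) ∧ (⋃ n, K n) = Set.univ ∧
    ∀ F : Set X, IsClosed F ↔ ∀ n, IsClosed (((↑) : K n → X) ⁻¹' F)

def IsCompactCoverMap {X Y : Type*} [TopologicalSpace X] [TopologicalSpace Y]
    (f : X → Y) : Prop :=
  Continuous f ∧ Function.Surjective f ∧
    ∀ C : Set Y, IsCompact C → ∃ K : Set X, IsCompact K ∧ f '' K = C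

/-!
Replace the compact cover by the increasing one `K₀ ∪ ⋯ ∪ Kₙ`. Given disjoint closed `A` and `B`,
use that disjoint compact sets of a Hausdorff space have disjoint neighbourhoods to grow, one
piece at a time, relatively open neighbourhoods `uₙ ⊇ A ∩ Kₙ` and `vₙ ⊇ B ∩ Kₙ` inside `Kₙ` whose
closures are disjoint and avoid `B`, resp. `A`, with `closure uₙ ⊆ uₙ₊₁` and `closure vₙ ⊆ vₙ₊₁`.
The unions `⋃ uₙ` and `⋃ vₙ` meet every `Kₘ` in a relatively open set, so they are open in `X`,
and they separate `A` from `B`.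
-/

section

variable {X : Type*} [TopologicalSpace X]

namespace IsKOmegaStructure

variable {K : ℕ → Set X}

theorem accumulate (hK : IsKOmegaStructure K) : IsKOmegaStructure (Set.accumulate K) := by
  obtain ⟨hcpt, hcov, hcl⟩ := hK
  refine ⟨isCompact_accumulate hcpt, by rw [iUnion_accumulate, hcov], fun F => ?_⟩
  refine ⟨fun hF n => hF.preimage continuous_subtype_val, fun h => (hcl F).2 fun n => ?_⟩
  exact (h n).preimage (continuous_inclusion (subset_accumulate (x := n)))

theorem isOpen_iff (hK : IsKOmegaStructure K) {U : Set X} :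
    IsOpen U ↔ ∀ n, IsOpen (((↑) : K n → X) ⁻¹' U) := by
  simp only [← isClosed_compl_iff, hK.2.2, preimage_compl]

theorem isOpen_iUnion_inter (hK : IsKOmegaStructure K) (hmono : Monotone K) {U : ℕ → Set X}
    (hU : ∀ n, IsOpen (U n)) (hu : Monotone fun n => U n ∩ K n) :
    IsOpen (⋃ n, U n ∩ K n) := by
  refine hK.isOpen_iff.2 fun m => ?_
  suffices ((↑) : K m → X) ⁻¹' (⋃ n, U n ∩ K n) = (↑) ⁻¹' ⋃ n, U (m + n) from
    this ▸ (isOpen_iUnion fun n => hU (m + n)).preimage continuous_subtype_val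
  ext ⟨x, hx⟩
  simp only [mem_preimage, mem_iUnion]
  constructor
  · rintro ⟨n, hn⟩
    exact ⟨n, (hu (Nat.le_add_left n m) hn).1⟩
  · rintro ⟨n, hn⟩
    exact ⟨m + n, hn, hmono (Nat.le_add_right m n) hx⟩

end IsKOmegaStructure

/-- One stage of the construction: the traces `U ∩ c` and `V ∩ c` are the relatively open
neighbourhoods of `A ∩ c` and `B ∩ c`. -/
structure SeparatesOn (A B c U V : Set X) : Prop where
  isOpen_left : IsOpen U
  isOpen_right : IsOpen V
  subset_left : A ∩ c ⊆ U
  subset_right : B ∩ c ⊆ V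
  disjoint : Disjoint (A ∪ closure (U ∩ c)) (B ∪ closure (V ∩ c))

theorem SeparatesOn.mono {A B A' B' c U V : Set X} (h : SeparatesOn A' B' c U V)
    (hA : A ⊆ A') (hB : B ⊆ B') : SeparatesOn A B c U V where
  isOpen_left := h.isOpen_left
  isOpen_right := h.isOpen_right
  subset_left := (inter_subset_inter_left c hA).trans h.subset_left
  subset_right := (inter_subset_inter_left c hB).trans h.subset_right
  disjoint := h.disjoint.mono (union_subset_union_left _ hA) (union_subset_union_left _ hB)

variable [T2Space X]

theorem exists_isOpen_disjoint_closure_inter {c S T : Set X} (hc : IsCompact c)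
    (hS : IsCompact S) (hT : IsCompact T) (hST : Disjoint S T) :
    ∃ U V, IsOpen U ∧ IsOpen V ∧ S ⊆ U ∧ T ⊆ V ∧
      Disjoint (closure (U ∩ c)) (closure (V ∩ c)) := by
  obtain ⟨U, V₀, hU, hV₀, hSU, hTV₀, hUV₀⟩ := SeparatedNhds.of_isCompact_isCompact hS hT hST
  have hC : IsCompact (closure (U ∩ c)) :=
    hc.of_isClosed_subset isClosed_closure (closure_minimal inter_subset_right hc.isClosed)
  have hCT : Disjoint (closure (U ∩ c)) T :=
    ((hUV₀.mono_left inter_subset_left).closure_left hV₀).mono_right hTV₀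
  obtain ⟨U₁, V, hU₁, hV, hCU₁, hTV, hU₁V⟩ := SeparatedNhds.of_isCompact_isCompact hC hT hCT
  exact ⟨U, V, hU, hV, hSU, hTV,
    ((hU₁V.closure_right hU₁).mono hCU₁ (closure_mono inter_subset_left))⟩

theorem exists_separatesOn {A B c : Set X} (hc : IsCompact c) (hA : IsClosed A)
    (hB : IsClosed B) (hAB : Disjoint A B) : ∃ U V, SeparatesOn A B c U V := by
  obtain ⟨U, V, hU, hV, hAU, hBV, hUV⟩ := exists_isOpen_disjoint_closure_inter hc
    (hc.inter_left hA) (hc.inter_left hB) (hAB.mono inter_subset_left inter_subset_left)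
  have closure_subset {W : Set X} : closure (W ∩ c) ⊆ c :=
    closure_minimal inter_subset_right hc.isClosed
  refine ⟨U, V, ⟨hU, hV, hAU, hBV, ?_⟩⟩
  refine disjoint_union_left.2 ⟨disjoint_union_right.2 ⟨hAB, ?_⟩,
    disjoint_union_right.2 ⟨?_, hUV⟩⟩
  · refine disjoint_left.2 fun x hxA hxV => disjoint_left.1 hUV (subset_closure ?_) hxV
    exact ⟨hAU ⟨hxA, closure_subset hxV⟩, closure_subset hxV⟩
  · refine disjoint_right.2 fun x hxB hxU => disjoint_right.1 hUV (subset_closure ?_) hxU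
    exact ⟨hBV ⟨hxB, closure_subset hxU⟩, closure_subset hxU⟩

theorem SeparatesOn.exists_succ {A B c c' U V : Set X} (h : SeparatesOn A B c U V)
    (hA : IsClosed A) (hB : IsClosed B) (hc : IsClosed c) (hc' : IsCompact c') (hcc' : c ⊆ c') :
    ∃ U' V', SeparatesOn A B c' U' V' ∧ closure (U ∩ c) ⊆ U' ∧ closure (V ∩ c) ⊆ V' := by
  obtain ⟨U', V', h'⟩ := exists_separatesOn hc' (hA.union isClosed_closure)
    (hB.union isClosed_closure) h.disjoint
  have closure_subset {W : Set X} : closure (W ∩ c) ⊆ c' :=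
    (closure_minimal inter_subset_right hc).trans hcc'
  exact ⟨U', V', h'.mono subset_union_left subset_union_left,
    fun x hx => h'.subset_left ⟨Or.inr hx, closure_subset hx⟩,
    fun x hx => h'.subset_right ⟨Or.inr hx, closure_subset hx⟩⟩

theorem exists_seq_separatesOn {A B : Set X} {c : ℕ → Set X} (hc : ∀ n, IsCompact (c n))
    (hmono : Monotone c) (hA : IsClosed A) (hB : IsClosed B) (hAB : Disjoint A B) :
    ∃ U V : ℕ → Set X, (∀ n, SeparatesOn A B (c n) (U n) (V n)) ∧
      (∀ n, closure (U n ∩ c n) ⊆ U (n + 1)) ∧ (∀ n, closure (V n ∩ c n) ⊆ V (n + 1)) := by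
  obtain ⟨U₀, V₀, h₀⟩ := exists_separatesOn (hc 0) hA hB hAB
  have step (n : ℕ) (p : {p : Set X × Set X // SeparatesOn A B (c n) p.1 p.2}) :
      ∃ q : {q : Set X × Set X // SeparatesOn A B (c (n + 1)) q.1 q.2},
        closure (p.1.1 ∩ c n) ⊆ q.1.1 ∧ closure (p.1.2 ∩ c n) ⊆ q.1.2 := by
    obtain ⟨U, V, h, hU, hV⟩ :=
      p.2.exists_succ hA hB (hc n).isClosed (hc (n + 1)) (hmono n.le_succ)
    exact ⟨⟨(U, V), h⟩, hU, hV⟩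
  choose next hnext using step
  let seq (n : ℕ) : {p : Set X × Set X // SeparatesOn A B (c n) p.1 p.2} :=
    Nat.rec ⟨(U₀, V₀), h₀⟩ next n
  exact ⟨fun n => (seq n).1.1, fun n => (seq n).1.2, fun n => (seq n).2,
    fun n => (hnext n (seq n)).1, fun n => (hnext n (seq n)).2⟩

theorem IsKOmegaStructure.separatedNhds {K : ℕ → Set X} (hK : IsKOmegaStructure K)
    (hmono : Monotone K) {A B : Set X} (hA : IsClosed A) (hB : IsClosed B)
    (hAB : Disjoint A B) : SeparatedNhds A B := by
  obtain ⟨U, V, hsep, hU, hV⟩ := exists_seq_separatesOn hK.1 hmono hA hB hAB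
  have grows {W : ℕ → Set X} (hW : ∀ n, closure (W n ∩ K n) ⊆ W (n + 1)) :
      Monotone fun n => W n ∩ K n :=
    monotone_nat_of_le_succ fun n =>
      subset_inter (subset_closure.trans (hW n)) (inter_subset_right.trans (hmono n.le_succ))
  have covers {C : Set X} {W : ℕ → Set X} (hW : ∀ n, C ∩ K n ⊆ W n) :
      C ⊆ ⋃ n, W n ∩ K n := fun x hx =>
    have ⟨n, hn⟩ := mem_iUnion.1 (hK.2.1 ▸ mem_univ x)
    mem_iUnion.2 ⟨n, hW n ⟨hx, hn⟩, hn⟩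
  refine ⟨⋃ n, U n ∩ K n, ⋃ n, V n ∩ K n,
    hK.isOpen_iUnion_inter hmono (fun n => (hsep n).isOpen_left) (grows hU),
    hK.isOpen_iUnion_inter hmono (fun n => (hsep n).isOpen_right) (grows hV),
    covers fun n => (hsep n).subset_left, covers fun n => (hsep n).subset_right, ?_⟩
  refine disjoint_iUnion_left.2 fun n => disjoint_iUnion_right.2 fun m => ?_
  exact (hsep (max n m)).disjoint.mono
    ((grows hU (le_max_left n m)).trans (subset_closure.trans subset_union_right))
    ((grows hV (le_max_right n m)).trans (subset_closure.trans subset_union_right))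

end

theorem stmt9 {X : Type*} [TopologicalSpace X] [T2Space X]
    (h : ∃ K : ℕ → Set X, IsKOmegaStructure K) : NormalSpace X := by
  obtain ⟨K, hK⟩ := h
  exact ⟨fun _ _ hA hB hAB => hK.accumulate.separatedNhds monotone_accumulate hA hB hAB⟩
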